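/- arXiv:1703.06183 — 3 statements merged into one kernel-verified Lean document; each statement's English description precedes it below -/
import Mathlib

section
/- Let E be a finite-dimensional normed vector space over ℝ or ℂ, let S ⊆ E be a linear subspace, and let L assign to each s ≥ 0 a linear operator L_s on E such that s ↦ ‖L_s‖ (operator norm) is integrable on [0,t] for every t ≥ 0 and L_s maps S into S for every s (invariance of S under the generator). Suppose x : [0,∞) → E is continuous and satisfies the integral equation x(t) = x(0) + ∫_0^t L_s(x(s)) ds for all t ≥ 0. If x(0) ∉ S, then x(t) ∉ S for every finite t ≥ 0; i.e., a trajectory of a time-varying linear equation starting outside an invariant subspace cannot reach it exactly in finite time. -/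
/-!
Let `q : E → E ⧸ S` be the quotient map and `y = q ∘ x`. Since `S` is invariant,
`y r - y t = ∫ₜʳ q (L s (x s)) ds` with `‖q (L s (x s))‖ ≤ ‖L s‖ * ‖y s‖`, and `y T = 0` when
`x T ∈ S`. A Gronwall argument run backwards from `T` then gives `y 0 = 0`: on an interval
`[c, r]` ending at a zero of `y` and with `∫ ‖L‖ < 1`, the maximum `M` of `‖y‖` satisfies
`M ≤ (∫ ‖L‖) * M`, so `y` vanishes there, and continuous induction spreads the zero set down to
`0`.
-/

open MeasureTheory intervalIntegral
open Set Filter Topology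

theorem Submodule.Quotient.norm_mk_apply_le {𝕜 E F : Type*} [NontriviallyNormedField 𝕜]
    [SeminormedAddCommGroup E] [NormedSpace 𝕜 E] [SeminormedAddCommGroup F] [NormedSpace 𝕜 F]
    {S : Submodule 𝕜 E} {T : Submodule 𝕜 F} (f : E →L[𝕜] F) (h : ∀ v ∈ S, f v ∈ T)
    (v : E) :
    ‖(mk (f v) : F ⧸ T)‖ ≤ ‖f‖ * ‖(mk v : E ⧸ S)‖ := by
  have : Nonempty S := ⟨0⟩
  have hv : ‖(mk v : E ⧸ S)‖ = Metric.infDist v S := QuotientAddGroup.norm_mk v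
  rw [hv, Metric.infDist_eq_iInf, Real.mul_iInf_of_nonneg (norm_nonneg f)]
  refine le_ciInf fun s => ?_
  have hfs : (mk (f s) : F ⧸ T) = 0 := (Submodule.Quotient.mk_eq_zero T).mpr (h _ s.2)
  calc ‖(mk (f v) : F ⧸ T)‖ = ‖(mk (f (v - s)) : F ⧸ T)‖ := by
        rw [map_sub, Submodule.Quotient.mk_sub, hfs, sub_zero]
    _ ≤ ‖f (v - s)‖ := Submodule.Quotient.norm_mk_le T _
    _ ≤ ‖f‖ * dist v s := by rw [dist_eq_norm]; exact f.le_opNorm _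

theorem IntervalIntegrable.clm_apply_continuousOn {𝕜 E F : Type*} [NontriviallyNormedField 𝕜]
    [NormedAddCommGroup E] [NormedSpace 𝕜 E] [NormedAddCommGroup F] [NormedSpace 𝕜 F]
    {L : ℝ → E →L[𝕜] F} {x : ℝ → E} {a b : ℝ} (hL : IntervalIntegrable L volume a b)
    (hx : ContinuousOn x (uIcc a b)) : IntervalIntegrable (fun s => L s (x s)) volume a b := by
  obtain ⟨C, hC⟩ := isCompact_uIcc.exists_bound_of_continuousOn hx
  rw [intervalIntegrable_iff'] at hL ⊢
  have hxm : AEStronglyMeasurable x (volume.restrict (uIcc a b)) :=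
    hx.aestronglyMeasurable measurableSet_uIcc
  refine Integrable.mono' (hL.norm.mul_const C)
    ((ContinuousLinearMap.apply 𝕜 F).aestronglyMeasurable_comp₂ hxm hL.aestronglyMeasurable) ?_
  filter_upwards [ae_restrict_mem measurableSet_uIcc] with s hs
  exact (L s).le_of_opNorm_le_of_le le_rfl (hC s hs)

section BackwardUniqueness

variable {F : Type*} [NormedAddCommGroup F] [NormedSpace ℝ F] {y f : ℝ → F} {k : ℝ → ℝ}
  {a b : ℝ}

theorem eqOn_zero_of_integral_lt_one (hy : ContinuousOn y (Icc a b))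
    (hk : IntervalIntegrable k volume a b) (hk₀ : ∀ s ∈ Icc a b, 0 ≤ k s)
    (hk₁ : ∫ s in a..b, k s < 1) (hyf : ∀ t ∈ Icc a b, y b - y t = ∫ s in t..b, f s)
    (hf : ∀ s ∈ Icc a b, ‖f s‖ ≤ k s * ‖y s‖) (hb : y b = 0) : EqOn y 0 (Icc a b) := by
  intro t ht
  obtain ⟨t₀, ht₀, hmax⟩ := isCompact_Icc.exists_isMaxOn ⟨t, ht⟩ hy.norm
  set M := ‖y t₀‖
  have hM : M ≤ (∫ s in a..b, k s) * M :=
    calc M = ‖∫ s in t₀..b, f s‖ := by rw [← hyf t₀ ht₀, hb, zero_sub, norm_neg]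
      _ ≤ ∫ s in t₀..b, k s * M := by
        refine intervalIntegral.norm_integral_le_of_norm_le ht₀.2 (ae_of_all _ fun s hs => ?_)
          ((hk.mono_set (uIcc_subset_uIcc_right (Icc_subset_uIcc ht₀))).mul_const M)
        have hs' : s ∈ Icc a b := ⟨ht₀.1.trans hs.1.le, hs.2⟩
        exact (hf s hs').trans (mul_le_mul_of_nonneg_left (hmax hs') (hk₀ s hs'))
      _ = (∫ s in t₀..b, k s) * M := integral_mul_const M k
      _ ≤ (∫ s in a..b, k s) * M := by
        gcongr
        refine integral_mono_interval ht₀.1 ht₀.2 le_rfl ?_ hk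
        filter_upwards [ae_restrict_mem measurableSet_Ioc] with s hs
        exact hk₀ s (Ioc_subset_Icc_self hs)
  have hM₀ : M = 0 := by nlinarith [norm_nonneg (y t₀)]
  exact norm_le_zero_iff.mp (hM₀ ▸ hmax ht)

theorem eqOn_zero_of_eq_zero_right (hy : ContinuousOn y (Icc a b))
    (hk : IntervalIntegrable k volume a b) (hk₀ : ∀ s ∈ Icc a b, 0 ≤ k s)
    (hyf : ∀ t ∈ Icc a b, ∀ r ∈ Icc a b, y r - y t = ∫ s in t..r, f s)
    (hf : ∀ s ∈ Icc a b, ‖f s‖ ≤ k s * ‖y s‖) (hb : y b = 0) : EqOn y 0 (Icc a b) := by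
  have hclosed : IsClosed (y ⁻¹' {0} ∩ Icc a b) := by
    rw [inter_comm]; exact hy.preimage_isClosed_of_isClosed isClosed_Icc isClosed_singleton
  refine fun t ht =>
    hclosed.Icc_subset_of_forall_exists_lt hb (fun r ⟨hr, hra, hrb⟩ z hz => ?_) ht
  have hk' : IntegrableOn k (uIcc a r) volume := (intervalIntegrable_iff').mp
    (hk.mono_set (uIcc_subset_uIcc_left (Icc_subset_uIcc ⟨hra.le, hrb⟩)))
  have hsmall : ∀ᶠ c in 𝓝[<] r, ∫ s in c..r, k s < 1 := by
    have hcont := continuousOn_primitive_interval_left hk' r right_mem_uIcc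
    refine nhdsWithin_le_of_mem ?_ (hcont.tendsto.eventually_lt_const (by simp))
    rw [uIcc_of_le hra.le]
    exact Icc_mem_nhdsLT hra
  obtain ⟨c, ⟨hc, hcr⟩, hc₁⟩ := ((show ∀ᶠ c in 𝓝[<] r, c ∈ Ioo (max a z) r from
    Ioo_mem_nhdsLT (max_lt hra hz)).and hsmall).exists
  have hsub : Icc c r ⊆ Icc a b := Icc_subset_Icc ((le_max_left _ _).trans hc.le) hrb
  have hyc := eqOn_zero_of_integral_lt_one (hy.mono hsub)
    (hk.mono_set (by simpa [uIcc_of_le hcr.le, uIcc_of_le (hra.le.trans hrb)] using hsub))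
    (fun s hs => hk₀ s (hsub hs)) hc₁ (fun t ht => hyf t (hsub ht) r (hsub ⟨hcr.le, le_rfl⟩))
    (fun s hs => hf s (hsub hs)) hr ⟨le_rfl, hcr.le⟩
  exact ⟨c, hyc, (le_max_right _ _).trans hc.le, hcr⟩

end BackwardUniqueness

/-- Proposition 1, no finite-time convergence for time-local linear
dynamics: let `E` be a finite-dimensional normed space over `𝕜 = ℝ` or `ℂ`, `S ⊆ E` a
subspace invariant under the (modulus-integrable) time-dependent generator `L`, and let
`x` be a continuous solution of the integral equation `x t = x 0 + ∫₀ᵗ L s (x s) ds` on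
`[0,∞)`. If `x 0 ∉ S`, then `x t ∉ S` for every finite `t ≥ 0`. -/
theorem no_finite_time_reach_of_invariant_subspace
    {𝕜 : Type*} [RCLike 𝕜] {E : Type*} [NormedAddCommGroup E] [NormedSpace 𝕜 E]
    [NormedSpace ℝ E] [IsScalarTower ℝ 𝕜 E] [FiniteDimensional 𝕜 E]
    (S : Submodule 𝕜 E) (L : ℝ → (E →L[𝕜] E))
    (hint : ∀ t : ℝ, 0 ≤ t → IntervalIntegrable L MeasureTheory.volume 0 t)
    (hinv : ∀ s : ℝ, 0 ≤ s → ∀ v ∈ S, L s v ∈ S)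
    (x : ℝ → E) (hx : ContinuousOn x (Set.Ici (0 : ℝ)))
    (heq : ∀ t : ℝ, 0 ≤ t → x t = x 0 + ∫ s in (0 : ℝ)..t, L s (x s))
    (h0 : x 0 ∉ S) :
    ∀ t : ℝ, 0 ≤ t → x t ∉ S := by
  intro T hT hxT
  have : CompleteSpace E := FiniteDimensional.complete 𝕜 E
  have : IsClosed (S : Set E) := S.closed_of_finiteDimensional
  let q : E →L[𝕜] E ⧸ S := S.mkQ.toContinuousLinearMap
  have hxT' : ContinuousOn x (Icc 0 T) := hx.mono Icc_subset_Ici_self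
  have hLx : IntervalIntegrable (fun s => L s (x s)) volume 0 T :=
    (hint T hT).clm_apply_continuousOn (by rwa [uIcc_of_le hT])
  have hLx' : ∀ t ∈ Icc 0 T, ∀ r ∈ Icc 0 T,
      IntervalIntegrable (fun s => L s (x s)) volume t r :=
    fun t ht r hr => hLx.mono_set (uIcc_subset_uIcc (Icc_subset_uIcc ht) (Icc_subset_uIcc hr))
  have hyf : ∀ t ∈ Icc 0 T, ∀ r ∈ Icc 0 T,
      q (x r) - q (x t) = ∫ s in t..r, q (L s (x s)) := by
    intro t ht r hr
    rw [q.intervalIntegral_comp_comm (hLx' t ht r hr), ← map_sub, heq r hr.1, heq t ht.1,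
      add_sub_add_left_eq_sub,
      integral_interval_sub_left (hLx' 0 ⟨le_rfl, hT⟩ r hr) (hLx' 0 ⟨le_rfl, hT⟩ t ht)]
  have hy0 := eqOn_zero_of_eq_zero_right (q.continuous.comp_continuousOn hxT')
    (hint T hT).norm (fun s _ => norm_nonneg (L s)) hyf
    (fun s hs => Submodule.Quotient.norm_mk_apply_le (L s) (hinv s hs.1) (x s))
    ((Submodule.Quotient.mk_eq_zero S).mpr hxT) ⟨le_rfl, hT⟩
  exact h0 ((Submodule.Quotient.mk_eq_zero S).mp hy0)
end

section
/- Let ψ ∈ H be a unit vector with dim H ≥ 2 and let 𝒩 = {𝒩_1,…,𝒩_K} be a neighborhood structure. If ψ is FTS with respect to 𝒩, then: (i) span(ψ) = ⋂_{k=1}^K Σ̄_{𝒩_k}(ψ); and (ii) there exists at least one neighborhood 𝒩_k ∈ 𝒩 for which 2·dim Σ_{𝒩_k}(ψ) ≤ dim H_{𝒩_k} (the small Schmidt span condition). -/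
open scoped BigOperators Matrix ComplexOrder

namespace QLS

variable {N : ℕ}

/-- Index type of the full multipartite Hilbert space `⊗ᵢ ℂ^{d i}`. -/
abbrev Idx (d : Fin N → ℕ) : Type := ∀ i, Fin (d i)

/-- Index type of the Hilbert space `⊗_{i ∈ S} ℂ^{d i}` of a subset `S` of subsystems. -/
abbrev SIdx (d : Fin N → ℕ) (S : Finset (Fin N)) : Type := ∀ i : S, Fin (d i)

/-- Merge an index on `S` and an index on `Sᶜ` into a global index. -/
def merge (d : Fin N → ℕ) (S : Finset (Fin N)) (u : SIdx d S) (w : SIdx d Sᶜ) : Idx d :=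
  fun i => if h : i ∈ S then u ⟨i, h⟩ else w ⟨i, Finset.mem_compl.mpr h⟩

/-- Partial trace over the complement of `S`: `Tr_{Sᶜ}`. -/
noncomputable def ptrace (d : Fin N → ℕ) (S : Finset (Fin N))
    (M : Matrix (Idx d) (Idx d) ℂ) : Matrix (SIdx d S) (SIdx d S) ℂ :=
  fun u v => ∑ w : SIdx d Sᶜ, M (merge d S u w) (merge d S v w)

/-- `X` acts only on the subsystems in `S`, i.e. `X = Y ⊗ I_{Sᶜ}`. -/
def ActsOn (d : Fin N → ℕ) (S : Finset (Fin N)) (X : Matrix (Idx d) (Idx d) ℂ) : Prop :=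
  ∃ Y : Matrix (SIdx d S) (SIdx d S) ℂ, ∀ (u u' : SIdx d S) (w w' : SIdx d Sᶜ),
    X (merge d S u w) (merge d S u' w') = if w = w' then Y u u' else 0

/-- The rank-one projector `|ψ⟩⟨ψ|`. -/
noncomputable def proj (d : Fin N → ℕ) (ψ : Idx d → ℂ) : Matrix (Idx d) (Idx d) ℂ :=
  fun a b => ψ a * (starRingEnd ℂ) (ψ b)

/-- `ψ` is a unit vector. -/
def IsUnitVec (d : Fin N → ℕ) (ψ : Idx d → ℂ) : Prop :=
  ∑ a, Complex.normSq (ψ a) = 1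

/-- Superoperators on the multipartite space. -/
abbrev Sop (d : Fin N → ℕ) : Type :=
  Matrix (Idx d) (Idx d) ℂ →ₗ[ℂ] Matrix (Idx d) (Idx d) ℂ

/-- `E` is completely positive and trace preserving (Kraus form). -/
def IsCPTP (d : Fin N → ℕ) (E : Sop d) : Prop :=
  ∃ (m : ℕ) (K : Fin m → Matrix (Idx d) (Idx d) ℂ),
    (∀ ρ, E ρ = ∑ i, K i * ρ * (K i)ᴴ) ∧ (∑ i, (K i)ᴴ * K i = 1)

/-- `E` is a CPTP map whose Kraus operators all act only on `S`. -/
def IsNeighborhoodMap (d : Fin N → ℕ) (S : Finset (Fin N)) (E : Sop d) : Prop :=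
  ∃ (m : ℕ) (K : Fin m → Matrix (Idx d) (Idx d) ℂ),
    (∀ i, ActsOn d S (K i)) ∧
    (∀ ρ, E ρ = ∑ i, K i * ρ * (K i)ᴴ) ∧ (∑ i, (K i)ᴴ * K i = 1)

/-- A density matrix. -/
def IsDensity (d : Fin N → ℕ) (ρ : Matrix (Idx d) (Idx d) ℂ) : Prop :=
  ρ.PosSemidef ∧ ρ.trace = 1

/-- Sequential composition `E_{T-1} ∘ ⋯ ∘ E_1 ∘ E_0` (index `0` applied first). -/
def seqComp {V : Type*} [AddCommMonoid V] [Module ℂ V] :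
    ∀ {T : ℕ}, (Fin T → (V →ₗ[ℂ] V)) → (V →ₗ[ℂ] V)
  | 0, _ => LinearMap.id
  | T + 1, E => E (Fin.last T) ∘ₗ seqComp fun t => E t.castSucc

/-- Finite-time stabilizability of `ψ` w.r.t. the neighborhood structure `𝒩`. -/
def FTS (d : Fin N → ℕ) {K : ℕ} (𝒩 : Fin K → Finset (Fin N)) (ψ : Idx d → ℂ) : Prop :=
  ∃ (T : ℕ) (E : Fin T → Sop d),
    (∀ t, ∃ k, IsNeighborhoodMap d (𝒩 k) (E t)) ∧
    (∀ t, E t (proj d ψ) = proj d ψ) ∧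
    (∀ σ, IsDensity d σ → seqComp E σ = proj d ψ)

/-- Robust finite-time stabilizability: any ordering of the maps prepares `ψ`. -/
def RFTS (d : Fin N → ℕ) {K : ℕ} (𝒩 : Fin K → Finset (Fin N)) (ψ : Idx d → ℂ) : Prop :=
  ∃ (T : ℕ) (E : Fin T → Sop d),
    (∀ t, ∃ k, IsNeighborhoodMap d (𝒩 k) (E t)) ∧
    (∀ t, E t (proj d ψ) = proj d ψ) ∧
    (∀ π : Equiv.Perm (Fin T), ∀ σ, IsDensity d σ → seqComp (fun t => E (π t)) σ = proj d ψ)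

/-- The Schmidt span of `ψ` on `S`: the range of the reduced state `Tr_{Sᶜ}|ψ⟩⟨ψ|`. -/
noncomputable def schmidtSpan (d : Fin N → ℕ) (S : Finset (Fin N)) (ψ : Idx d → ℂ) :
    Submodule ℂ (SIdx d S → ℂ) :=
  LinearMap.range (Matrix.mulVecLin (ptrace d S (proj d ψ)))

/-- Slicing a global vector along a fixed index of `Sᶜ` (linear in the vector). -/
def sliceMap (d : Fin N → ℕ) (S : Finset (Fin N)) (w : SIdx d Sᶜ) :
    (Idx d → ℂ) →ₗ[ℂ] (SIdx d S → ℂ) where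
  toFun v := fun u => v (merge d S u w)
  map_add' _ _ := rfl
  map_smul' _ _ := rfl

/-- The extended Schmidt span `Σ̄_S(ψ) = Σ_S(ψ) ⊗ H_{Sᶜ}`, described as the set of vectors
all of whose slices along `Sᶜ` lie in the Schmidt span. -/
noncomputable def extSchmidtSpan (d : Fin N → ℕ) (S : Finset (Fin N)) (ψ : Idx d → ℂ) :
    Submodule ℂ (Idx d → ℂ) :=
  ⨅ w : SIdx d Sᶜ, (schmidtSpan d S ψ).comap (sliceMap d S w)

/-- `P` is the orthogonal projection matrix onto the subspace `V` (Hermitian idempotent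
with range `V`). -/
def IsOrthProjOnto {ι : Type*} [Fintype ι] [DecidableEq ι]
    (P : Matrix ι ι ℂ) (V : Submodule ℂ (ι → ℂ)) : Prop :=
  Pᴴ = P ∧ P * P = P ∧ LinearMap.range P.mulVecLin = V

/-- The neighborhood expansion `A^𝒩` of a set of subsystems. -/
def expand {K : ℕ} (𝒩 : Fin K → Finset (Fin N)) (A : Finset (Fin N)) : Finset (Fin N) :=
  Finset.univ.biUnion fun k => if (𝒩 k ∩ A).Nonempty then 𝒩 k else ∅

/-- Standard sesquilinear dot product. -/
noncomputable def dotc {ι : Type*} [Fintype ι] (u v : ι → ℂ) : ℂ :=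
  ∑ a, (starRingEnd ℂ) (u a) * v a

/-- Slicing a global vector along a single site `i`, other coordinates fixed by `a`. -/
def sliceAt (d : Fin N → ℕ) (i : Fin N) (a : Idx d) :
    (Idx d → ℂ) →ₗ[ℂ] (Fin (d i) → ℂ) where
  toFun v := fun x => v (Function.update a i x)
  map_add' _ _ := rfl
  map_smul' _ _ := rfl

/-- The tensor product `⊗ᵢ tᵢ` of local subspaces, as a subspace of the global space:
the set of vectors all of whose single-site slices lie in the local subspaces. -/
noncomputable def tensorSub (d : Fin N → ℕ) (t : ∀ i, Submodule ℂ (Fin (d i) → ℂ)) :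
    Submodule ℂ (Idx d → ℂ) :=
  ⨅ i, ⨅ a : Idx d, (t i).comap (sliceAt d i a)

open Classical in
/-- The operator `X` on the `j`-th factor, amplified by the identity on all other factors. -/
noncomputable def factorMat {M : ℕ} (m : Fin M → ℕ) (j : Fin M)
    (X : Matrix (Fin (m j)) (Fin (m j)) ℂ) :
    Matrix (∀ l, Fin (m l)) (∀ l, Fin (m l)) ℂ :=
  fun a b => if (∀ l, l ≠ j → a l = b l) then X (a j) (b j) else 0

/-- Partial trace onto a single site `i`. -/
noncomputable def ptrace1 (d : Fin N → ℕ) (i : Fin N) (M : Matrix (Idx d) (Idx d) ℂ) :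
    Matrix (Fin (d i)) (Fin (d i)) ℂ :=
  fun x y => ∑ a : Idx d, if a i = x then M a (Function.update a i y) else 0

/-- Local support `H̃ᵢ`: the range of the single-site reduced state of `ψ`. -/
noncomputable def localSupp (d : Fin N → ℕ) (ψ : Idx d → ℂ) (i : Fin N) :
    Submodule ℂ (Fin (d i) → ℂ) :=
  LinearMap.range (Matrix.mulVecLin (ptrace1 d i (proj d ψ)))

/-- Set of skew-Hermitian matrices commuting with `|ψ⟩⟨ψ|` (the Lie algebra `u_ψ`). -/
noncomputable def stabSet (d : Fin N → ℕ) (ψ : Idx d → ℂ) :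
    Set (Matrix (Idx d) (Idx d) ℂ) :=
  {X | Xᴴ = -X ∧ X * proj d ψ = proj d ψ * X}

/-- The Lie algebra `u_{𝒩ₖ,ψ}` of skew-Hermitian stabilizers acting only on `S`. -/
noncomputable def nstabSet (d : Fin N → ℕ) (S : Finset (Fin N)) (ψ : Idx d → ℂ) :
    Set (Matrix (Idx d) (Idx d) ℂ) :=
  {X | (Xᴴ = -X ∧ X * proj d ψ = proj d ψ * X) ∧ ActsOn d S X}

attribute [local instance] LieRing.ofAssociativeRing

/-- The unitary generation property: the real Lie algebra generated by the
neighborhood stabilizer algebras is the full stabilizer algebra `u_ψ`. -/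
noncomputable def UnitaryGenProp (d : Fin N → ℕ) {K : ℕ} (𝒩 : Fin K → Finset (Fin N))
    (ψ : Idx d → ℂ) : Prop :=
  ((LieSubalgebra.lieSpan ℝ (Matrix (Idx d) (Idx d) ℂ)
      (⋃ k, nstabSet d (𝒩 k) ψ)) : Set (Matrix (Idx d) (Idx d) ℂ)) = stabSet d ψ

/-- The unitary stabilizer group `U_ψ` (as a set of matrices). -/
noncomputable def uStab (d : Fin N → ℕ) (ψ : Idx d → ℂ) : Set (Matrix (Idx d) (Idx d) ℂ) :=
  {U | U ∈ Matrix.unitaryGroup (Idx d) ℂ ∧ U * proj d ψ * Uᴴ = proj d ψ}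

/-- The neighborhood unitary stabilizer group `U_{𝒩ₖ,ψ}` (as a set of matrices). -/
noncomputable def uNStab (d : Fin N → ℕ) (S : Finset (Fin N)) (ψ : Idx d → ℂ) :
    Set (Matrix (Idx d) (Idx d) ℂ) :=
  {U | (U ∈ Matrix.unitaryGroup (Idx d) ℂ ∧ U * proj d ψ * Uᴴ = proj d ψ) ∧ ActsOn d S U}

/-- `x log x` with the convention `0 log 0 = 0`. -/
noncomputable def entAux (x : ℝ) : ℝ := if x = 0 then 0 else x * Real.log x

open Classical in
/-- Von Neumann entropy of a (Hermitian) matrix. -/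
noncomputable def vnEntropy {n : Type*} [Fintype n] [DecidableEq n]
    (σ : Matrix n n ℂ) : ℝ :=
  if h : σ.IsHermitian then -∑ i, entAux (h.eigenvalues i) else 0

/-!
Every step of the protocol fixes `|ψ⟩⟨ψ|`, so `ψ` is a common eigenvector of its Kraus operators.
A Kraus operator `Y ⊗ I` acting on a neighborhood then acts by the same scalar on the whole
extended Schmidt span of `ψ`, so every vector `v ∈ ⋂ₖ Σ̄_{𝒩ₖ}(ψ)` gives a pure state `|v⟩⟨v|`
fixed by the whole protocol; as the protocol sends every state to `|ψ⟩⟨ψ|`, `v ∈ span ψ`.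

For (ii): since `dim H ≥ 2`, some step sends a density matrix `ρ ≠ |ψ⟩⟨ψ|` to `|ψ⟩⟨ψ|`. Its Kraus
operators map the range of `ρ` into `span ψ`, which produces `φ ⊥ ψ`, `φ ≠ 0`, and a linear
combination `A = Y ⊗ I` of the Kraus operators with `A ψ = 0` and `A φ = ψ`. Reshaping vectors
into `H_{𝒩ₖ} × H_{𝒩ₖᶜ}` matrices, the Schmidt span of `ψ` lies both in `ker Y` and in `range Y`,
so twice its dimension is at most `dim H_{𝒩ₖ}`.
-/

open Matrix

section RankOne

variable {ι : Type*} [Fintype ι]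

lemma vecMulVec_star_mulVec (ψ y : ι → ℂ) :
    vecMulVec ψ (star ψ) *ᵥ y = (star ψ ⬝ᵥ y) • ψ := by
  rw [vecMulVec_mulVec, op_smul_eq_smul]

lemma mul_vecMulVec_star_mul_conjTranspose (K : Matrix ι ι ℂ) (v : ι → ℂ) :
    K * vecMulVec v (star v) * Kᴴ = vecMulVec (K *ᵥ v) (star (K *ᵥ v)) := by
  rw [mul_vecMulVec, vecMulVec_mul, star_mulVec]

lemma star_smul_dotProduct_smul (a c : ℂ) (v : ι → ℂ) :
    star (a • v) ⬝ᵥ (c • v) = star a * c * (star v ⬝ᵥ v) := by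
  rw [star_smul, smul_dotProduct, dotProduct_smul, smul_eq_mul, smul_eq_mul]
  ring

lemma mem_span_of_forall_orthogonal {ψ v : ι → ℂ} (hψ : star ψ ⬝ᵥ ψ = 1)
    (h : ∀ z : ι → ℂ, star z ⬝ᵥ ψ = 0 → star z ⬝ᵥ v = 0) : v ∈ Submodule.span ℂ {ψ} := by
  set z := v - (star ψ ⬝ᵥ v) • ψ
  have hzψ : star z ⬝ᵥ ψ = 0 := by
    rw [star_dotProduct, dotProduct_sub, dotProduct_smul, hψ, smul_eq_mul, mul_one, sub_self,
      star_zero]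
  have hzz : star z ⬝ᵥ z = 0 := by
    rw [dotProduct_sub, dotProduct_smul, h z hzψ, hzψ, smul_zero, sub_zero]
  rw [Submodule.mem_span_singleton]
  exact ⟨star ψ ⬝ᵥ v, (sub_eq_zero.mp (dotProduct_star_self_eq_zero.mp hzz)).symm⟩

lemma eq_vecMulVec_of_forall_mulVec_mem_span {ρ : Matrix ι ι ℂ} {ψ : ι → ℂ}
    (hψ : star ψ ⬝ᵥ ψ = 1) (hρ : ρ.IsHermitian) (htr : ρ.trace = 1)
    (hrange : ∀ y, ρ *ᵥ y ∈ Submodule.span ℂ {ψ}) : ρ = vecMulVec ψ (star ψ) := by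
  have hPρ : vecMulVec ψ (star ψ) * ρ = ρ := by
    refine ext_iff_mulVec.mpr fun y => ?_
    obtain ⟨c, hc⟩ := Submodule.mem_span_singleton.mp (hrange y)
    rw [← mulVec_mulVec, ← hc, vecMulVec_star_mulVec, dotProduct_smul, hψ, smul_eq_mul, mul_one]
  have hρP : ρ * vecMulVec ψ (star ψ) = ρ := by
    have h := congrArg conjTranspose hPρ
    rwa [conjTranspose_mul, hρ.eq, conjTranspose_vecMulVec, star_star] at h
  have hρ_eq : ρ = (star ψ ᵥ* ρ ⬝ᵥ ψ) • vecMulVec ψ (star ψ) := calc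
    ρ = vecMulVec ψ (star ψ) * ρ * vecMulVec ψ (star ψ) := by rw [hPρ, hρP]
    _ = _ := by rw [vecMulVec_mul, vecMulVec_mul_vecMulVec, vecMulVec_smul]
  have hc : star ψ ᵥ* ρ ⬝ᵥ ψ = 1 := by
    have h := congrArg trace hρ_eq
    rw [trace_smul, trace_vecMulVec, dotProduct_comm ψ, hψ, htr, smul_eq_mul, mul_one] at h
    exact h.symm
  rw [hρ_eq, hc, one_smul]

end RankOne

section Kraus

variable {ι κ : Type*} [Fintype ι] [Fintype κ] {K : κ → Matrix ι ι ℂ}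

lemma sum_star_mulVec_dotProduct_mulVec [DecidableEq ι] (hK : ∑ i, (K i)ᴴ * K i = 1) (v w : ι → ℂ) :
    ∑ i, star (K i *ᵥ v) ⬝ᵥ (K i *ᵥ w) = star v ⬝ᵥ w := by
  simp_rw [star_mulVec, ← dotProduct_mulVec, mulVec_mulVec]
  rw [← dotProduct_sum, ← sum_mulVec, hK, one_mulVec]

/-- A vector `z ⊥ ψ` has `∑ᵢ ⟨z, Kᵢ ρ Kᵢ† z⟩ = 0` with nonnegative summands, so `ρ Kᵢ† z = 0`. -/
lemma kraus_mulVec_mulVec_mem_span {ρ : Matrix ι ι ℂ} {ψ : ι → ℂ} (hψ : star ψ ⬝ᵥ ψ = 1)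
    (hρ : ρ.PosSemidef) (hout : ∑ i, K i * ρ * (K i)ᴴ = vecMulVec ψ (star ψ)) (i : κ)
    (y : ι → ℂ) : K i *ᵥ (ρ *ᵥ y) ∈ Submodule.span ℂ {ψ} := by
  refine mem_span_of_forall_orthogonal hψ fun z hz => ?_
  have hsum : ∑ j, star z ⬝ᵥ (K j * ρ * (K j)ᴴ) *ᵥ z = 0 := by
    rw [← dotProduct_sum, ← sum_mulVec, hout, vecMulVec_star_mulVec, dotProduct_smul, hz,
      smul_zero]
  have hterm : star z ⬝ᵥ (K i * ρ * (K i)ᴴ) *ᵥ z = 0 :=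
    (Finset.sum_eq_zero_iff_of_nonneg fun j _ =>
      (hρ.mul_mul_conjTranspose_same (K j)).dotProduct_mulVec_nonneg z).mp hsum i
      (Finset.mem_univ i)
  have hρKz : ρ *ᵥ ((K i)ᴴ *ᵥ z) = 0 := by
    refine (hρ.dotProduct_mulVec_zero_iff _).mp ?_
    rw [← hterm, star_mulVec, conjTranspose_conjTranspose, ← dotProduct_mulVec, mulVec_mulVec,
      mulVec_mulVec, mul_assoc]
  have hzKρ := congrArg star hρKz
  rw [star_mulVec, hρ.isHermitian.eq, star_mulVec, conjTranspose_conjTranspose, star_zero]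
    at hzKρ
  rw [dotProduct_mulVec, dotProduct_mulVec, hzKρ, zero_dotProduct]

lemma kraus_mulVec_mem_span_of_fixed {ψ : ι → ℂ} (hψ : star ψ ⬝ᵥ ψ = 1)
    (hfix : ∑ i, K i * vecMulVec ψ (star ψ) * (K i)ᴴ = vecMulVec ψ (star ψ)) (i : κ) :
    K i *ᵥ ψ ∈ Submodule.span ℂ {ψ} := by
  simpa [vecMulVec_star_mulVec, hψ] using
    kraus_mulVec_mulVec_mem_span hψ (posSemidef_vecMulVec_self_star ψ) hfix i ψ

lemma exists_orthogonal_kraus_mulVec_mem_span {ρ : Matrix ι ι ℂ} {ψ : ι → ℂ}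
    (hψ : star ψ ⬝ᵥ ψ = 1) (hρ : ρ.PosSemidef) (htr : ρ.trace = 1)
    (hne : ρ ≠ vecMulVec ψ (star ψ)) (hout : ∑ i, K i * ρ * (K i)ᴴ = vecMulVec ψ (star ψ))
    (hKψ : ∀ i, K i *ᵥ ψ ∈ Submodule.span ℂ {ψ}) :
    ∃ φ : ι → ℂ, φ ≠ 0 ∧ star ψ ⬝ᵥ φ = 0 ∧ ∀ i, K i *ᵥ φ ∈ Submodule.span ℂ {ψ} := by
  obtain ⟨y, hy⟩ : ∃ y, ρ *ᵥ y ∉ Submodule.span ℂ {ψ} := by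
    by_contra! hrange
    exact hne (eq_vecMulVec_of_forall_mulVec_mem_span hψ hρ.isHermitian htr hrange)
  refine ⟨ρ *ᵥ y - (star ψ ⬝ᵥ ρ *ᵥ y) • ψ, fun h => hy ?_, ?_, fun i => ?_⟩
  · rw [sub_eq_zero.mp h]
    exact Submodule.smul_mem _ _ (Submodule.mem_span_singleton_self ψ)
  · rw [dotProduct_sub, dotProduct_smul, hψ, smul_eq_mul, mul_one, sub_self]
  · rw [mulVec_sub, mulVec_smul]
    exact Submodule.sub_mem _ (kraus_mulVec_mulVec_mem_span hψ hρ hout i y)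
      (Submodule.smul_mem _ _ (hKψ i))

/-- The coefficients are `⟨Kᵢ φ, ψ⟩ / ‖φ‖²`: they kill `ψ` because `φ ⊥ ψ`, and send `φ` to
`ψ` because the channel is trace preserving. -/
lemma exists_kraus_combination_mulVec [DecidableEq ι] (hK : ∑ i, (K i)ᴴ * K i = 1)
    {ψ φ : ι → ℂ} (hψ : star ψ ⬝ᵥ ψ = 1) (hφ : φ ≠ 0) (hψφ : star ψ ⬝ᵥ φ = 0)
    (hKψ : ∀ i, K i *ᵥ ψ ∈ Submodule.span ℂ {ψ}) (hKφ : ∀ i, K i *ᵥ φ ∈ Submodule.span ℂ {ψ}) :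
    ∃ b : κ → ℂ, (∑ i, b i • K i) *ᵥ ψ = 0 ∧ (∑ i, b i • K i) *ᵥ φ = ψ := by
  choose c hc using fun i => Submodule.mem_span_singleton.mp (hKψ i)
  choose a ha using fun i => Submodule.mem_span_singleton.mp (hKφ i)
  have hφφ : star φ ⬝ᵥ φ ≠ 0 := fun h => hφ (dotProduct_star_self_eq_zero.mp h)
  have hac : ∑ i, star (a i) * c i = 0 := calc
    ∑ i, star (a i) * c i = ∑ i, star (K i *ᵥ φ) ⬝ᵥ (K i *ᵥ ψ) := by
      simp_rw [← ha, ← hc, star_smul_dotProduct_smul, hψ, mul_one]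
    _ = 0 := by rw [sum_star_mulVec_dotProduct_mulVec hK, star_dotProduct, hψφ, star_zero]
  have haa : ∑ i, star (a i) * a i = star φ ⬝ᵥ φ := calc
    ∑ i, star (a i) * a i = ∑ i, star (K i *ᵥ φ) ⬝ᵥ (K i *ᵥ φ) := by
      simp_rw [← ha, star_smul_dotProduct_smul, hψ, mul_one]
    _ = star φ ⬝ᵥ φ := sum_star_mulVec_dotProduct_mulVec hK φ φ
  refine ⟨fun i => star (a i) / (star φ ⬝ᵥ φ), ?_, ?_⟩
  · simp_rw [sum_mulVec, smul_mulVec, ← hc, smul_smul, ← Finset.sum_smul, div_mul_eq_mul_div,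
      ← Finset.sum_div, hac, zero_div, zero_smul]
  · simp_rw [sum_mulVec, smul_mulVec, ← ha, smul_smul, ← Finset.sum_smul, div_mul_eq_mul_div,
      ← Finset.sum_div, haa, div_self hφφ, one_smul]

end Kraus

lemma two_mul_rank_le_card_of_mul_eq_zero {n m 𝕜 : Type*} [Fintype n] [Fintype m] [Field 𝕜]
    {Y : Matrix n n 𝕜} {C D : Matrix n m 𝕜} (hYC : Y * C = 0) (hC : C = Y * D) :
    2 * C.rank ≤ Fintype.card n := by
  have h_le_rank : C.rank ≤ Y.rank := hC ▸ rank_mul_le_left Y D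
  have h_le_nullity : C.rank ≤ Module.finrank 𝕜 (LinearMap.ker Y.mulVecLin) :=
    Submodule.finrank_mono <| LinearMap.range_le_ker_iff.mpr <| by
      rw [← mulVecLin_mul, hYC, mulVecLin_zero]
  have h_rank_nullity :
      Y.rank + Module.finrank 𝕜 (LinearMap.ker Y.mulVecLin) = Fintype.card n := by
    rw [← Module.finrank_fintype_fun_eq_card 𝕜]
    exact LinearMap.finrank_range_add_finrank_ker Y.mulVecLin
  omega

section Reshape

variable {d : Fin N → ℕ} {S : Finset (Fin N)}

def mergeEquiv (d : Fin N → ℕ) (S : Finset (Fin N)) : SIdx d S × SIdx d Sᶜ ≃ Idx d where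
  toFun p := merge d S p.1 p.2
  invFun a := (fun i => a i, fun i => a i)
  left_inv := by
    rintro ⟨u, w⟩
    refine Prod.ext (funext fun i => ?_) (funext fun i => ?_)
    · simp [merge, i.prop]
    · simp [merge, Finset.mem_compl.mp i.prop]
  right_inv a := by
    funext i
    by_cases h : i ∈ S <;> simp [merge, h]

/-- A vector of `H_S ⊗ H_{Sᶜ}` seen as an `H_S × H_{Sᶜ}` matrix. -/
def reshape (d : Fin N → ℕ) (S : Finset (Fin N)) (v : Idx d → ℂ) :
    Matrix (SIdx d S) (SIdx d Sᶜ) ℂ :=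
  Matrix.of fun u w => v (merge d S u w)

lemma reshape_injective : Function.Injective (reshape d S) := by
  intro v v' h
  funext a
  obtain ⟨⟨u, w⟩, rfl⟩ := (mergeEquiv d S).surjective a
  exact congrFun₂ h u w

lemma reshape_smul (c : ℂ) (v : Idx d → ℂ) : reshape d S (c • v) = c • reshape d S v := rfl

lemma ptrace_proj (v : Idx d → ℂ) :
    ptrace d S (proj d v) = reshape d S v * (reshape d S v)ᴴ := by
  ext u u'
  simp [ptrace, proj, reshape, mul_apply]

lemma finrank_schmidtSpan (ψ : Idx d → ℂ) :
    Module.finrank ℂ (schmidtSpan d S ψ) = (reshape d S ψ).rank := by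
  rw [schmidtSpan, ptrace_proj]
  exact rank_self_mul_conjTranspose _

lemma schmidtSpan_eq_range_reshape (ψ : Idx d → ℂ) :
    schmidtSpan d S ψ = LinearMap.range (reshape d S ψ).mulVecLin := by
  refine Submodule.eq_of_le_of_finrank_eq ?_ (finrank_schmidtSpan ψ)
  rintro _ ⟨x, rfl⟩
  exact ⟨(reshape d S ψ)ᴴ *ᵥ x, by simp [ptrace_proj, mulVec_mulVec]⟩

lemma mem_extSchmidtSpan_iff {ψ v : Idx d → ℂ} :
    v ∈ extSchmidtSpan d S ψ ↔ ∀ w, (reshape d S v).col w ∈ schmidtSpan d S ψ := by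
  simp only [extSchmidtSpan, Submodule.mem_iInf, Submodule.mem_comap]
  rfl

lemma self_mem_extSchmidtSpan (ψ : Idx d → ℂ) : ψ ∈ extSchmidtSpan d S ψ := by
  refine mem_extSchmidtSpan_iff.mpr fun w => ?_
  rw [schmidtSpan_eq_range_reshape, ← mulVec_single_one]
  exact LinearMap.mem_range_self _ _

lemma reshape_mulVec {X : Matrix (Idx d) (Idx d) ℂ} {Y : Matrix (SIdx d S) (SIdx d S) ℂ}
    (hX : ∀ (u u' : SIdx d S) (w w' : SIdx d Sᶜ),
      X (merge d S u w) (merge d S u' w') = if w = w' then Y u u' else 0)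
    (v : Idx d → ℂ) : reshape d S (X *ᵥ v) = Y * reshape d S v := by
  ext u w
  simp only [reshape, of_apply, mulVec, dotProduct, mul_apply]
  rw [← (mergeEquiv d S).sum_comp, Fintype.sum_prod_type]
  refine Finset.sum_congr rfl fun u' _ => ?_
  simp [mergeEquiv, hX]

lemma ActsOn.sum_smul {ι : Type*} [Fintype ι] {K : ι → Matrix (Idx d) (Idx d) ℂ}
    (hK : ∀ i, ActsOn d S (K i)) (c : ι → ℂ) : ActsOn d S (∑ i, c i • K i) := by
  choose Y hY using hK
  refine ⟨∑ i, c i • Y i, fun u u' w w' => ?_⟩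
  simp only [Matrix.sum_apply, Matrix.smul_apply, hY]
  split_ifs <;> simp

lemma ActsOn.mulVec_eq_smul_of_mem_extSchmidtSpan {X : Matrix (Idx d) (Idx d) ℂ}
    (hX : ActsOn d S X) {ψ v : Idx d → ℂ} {c : ℂ} (hXψ : X *ᵥ ψ = c • ψ)
    (hv : v ∈ extSchmidtSpan d S ψ) : X *ᵥ v = c • v := by
  obtain ⟨Y, hY⟩ := hX
  have hYψ : Y * reshape d S ψ = c • reshape d S ψ := by
    rw [← reshape_mulVec hY, hXψ, reshape_smul]
  have hYcol : ∀ w, Y *ᵥ (reshape d S v).col w = c • (reshape d S v).col w := by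
    intro w
    obtain ⟨x, hx⟩ := schmidtSpan_eq_range_reshape ψ ▸ mem_extSchmidtSpan_iff.mp hv w
    rw [← hx, mulVecLin_apply, mulVec_mulVec, hYψ, smul_mulVec]
  apply reshape_injective (d := d) (S := S)
  rw [reshape_mulVec hY, reshape_smul]
  refine ext_of_mulVec_single fun w => ?_
  rw [← mulVec_mulVec, mulVec_single_one, hYcol, smul_mulVec, mulVec_single_one]

end Reshape

section Channels

variable {d : Fin N → ℕ}

lemma IsUnitVec.star_dotProduct_self {ψ : Idx d → ℂ} (hψ : IsUnitVec d ψ) :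
    star ψ ⬝ᵥ ψ = 1 := by
  rw [← Complex.ofReal_one, ← hψ, Complex.ofReal_sum]
  simp [dotProduct, Complex.normSq_eq_conj_mul_self]

lemma proj_eq_vecMulVec (ψ : Idx d → ℂ) : proj d ψ = vecMulVec ψ (star ψ) := rfl

lemma isDensity_proj {ψ : Idx d → ℂ} (hψ : star ψ ⬝ᵥ ψ = 1) : IsDensity d (proj d ψ) :=
  ⟨posSemidef_vecMulVec_self_star ψ, by
    rw [proj_eq_vecMulVec, trace_vecMulVec, dotProduct_comm, hψ]⟩

lemma IsNeighborhoodMap.isCPTP {S : Finset (Fin N)} {E : Sop d}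
    (hE : IsNeighborhoodMap d S E) : IsCPTP d E :=
  let ⟨m, K, _, hEK, hK⟩ := hE
  ⟨m, K, hEK, hK⟩

lemma IsCPTP.isDensity_apply {E : Sop d} (hE : IsCPTP d E) {σ : Matrix (Idx d) (Idx d) ℂ}
    (hσ : IsDensity d σ) : IsDensity d (E σ) := by
  obtain ⟨m, K, hEK, hK⟩ := hE
  refine ⟨hEK σ ▸ posSemidef_sum _ fun i _ => hσ.1.mul_mul_conjTranspose_same (K i), ?_⟩
  rw [hEK, trace_sum]
  simp_rw [trace_mul_cycle (K _) σ]
  rw [← trace_sum, ← Finset.sum_mul, hK, one_mul, hσ.2]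

lemma isDensity_seqComp {T : ℕ} {E : Fin T → Sop d} (hE : ∀ t, IsCPTP d (E t))
    {σ : Matrix (Idx d) (Idx d) ℂ} (hσ : IsDensity d σ) : IsDensity d (seqComp E σ) := by
  induction T with
  | zero => exact hσ
  | succ T ih => exact (hE (Fin.last T)).isDensity_apply (ih fun t => hE _)

lemma seqComp_apply_eq_self {V : Type*} [AddCommMonoid V] [Module ℂ V] {T : ℕ}
    {E : Fin T → V →ₗ[ℂ] V} {x : V} (hx : ∀ t, E t x = x) : seqComp E x = x := by
  induction T with
  | zero => rfl
  | succ T ih =>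
    show E (Fin.last T) (seqComp (fun t => E t.castSucc) x) = x
    rw [ih fun t => hx _, hx]

/-- The empty protocol cannot collapse all states because `dim H ≥ 2`. -/
lemma exists_isDensity_ne_apply_eq_proj {ψ : Idx d → ℂ} (hdim : 2 ≤ Fintype.card (Idx d))
    {T : ℕ} {E : Fin T → Sop d} (hE : ∀ t, IsCPTP d (E t))
    (hcollapse : ∀ σ, IsDensity d σ → seqComp E σ = proj d ψ) :
    ∃ t ρ, IsDensity d ρ ∧ ρ ≠ proj d ψ ∧ E t ρ = proj d ψ := by
  induction T with
  | zero =>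
    obtain ⟨a, b, hab⟩ := Fintype.exists_pair_of_one_lt_card hdim
    have hbasis : ∀ c : Idx d, IsDensity d (proj d (Pi.single c 1)) := fun c =>
      isDensity_proj (by simp [dotProduct, Pi.single_apply])
    have h := (hcollapse _ (hbasis a)).trans (hcollapse _ (hbasis b)).symm
    simpa [seqComp, proj, Pi.single_apply, hab] using congrFun₂ h a a
  | succ T ih =>
    by_cases h : ∀ σ, IsDensity d σ → seqComp (fun t => E t.castSucc) σ = proj d ψ
    · obtain ⟨t, ρ, hρ⟩ := ih (fun t => hE _) h
      exact ⟨t.castSucc, ρ, hρ⟩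
    · obtain ⟨σ, hσ, hne⟩ := not_forall₂.mp h
      exact ⟨Fin.last T, _, isDensity_seqComp (fun t => hE _) hσ, hne, hcollapse σ hσ⟩

lemma IsNeighborhoodMap.map_proj_of_mem_extSchmidtSpan {S : Finset (Fin N)} {E : Sop d}
    (hE : IsNeighborhoodMap d S E) {ψ v : Idx d → ℂ} (hψ : star ψ ⬝ᵥ ψ = 1)
    (hfix : E (proj d ψ) = proj d ψ) (hv : v ∈ extSchmidtSpan d S ψ) :
    E (proj d v) = proj d v := by
  obtain ⟨m, K, hKS, hEK, hK⟩ := hE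
  choose c hc using fun i => Submodule.mem_span_singleton.mp
    (kraus_mulVec_mem_span_of_fixed hψ ((hEK _).symm.trans hfix) i)
  have hKv : ∀ i, K i *ᵥ v = c i • v := fun i =>
    (hKS i).mulVec_eq_smul_of_mem_extSchmidtSpan (hc i).symm hv
  have hc_norm : ∑ i, star (c i) * c i = 1 := by
    have h := sum_star_mulVec_dotProduct_mulVec hK ψ ψ
    simp_rw [← hc, star_smul_dotProduct_smul, hψ, mul_one] at h
    exact h
  rw [hEK, proj_eq_vecMulVec]
  simp_rw [mul_vecMulVec_star_mul_conjTranspose, hKv, star_smul, vecMulVec_smul, smul_vecMulVec,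
    smul_smul, ← Finset.sum_smul, hc_norm, one_smul]

lemma mem_span_of_map_proj_eq_self {F : Sop d} {ψ v : Idx d → ℂ}
    (hcollapse : ∀ σ, IsDensity d σ → F σ = proj d ψ) (hv : F (proj d v) = proj d v) :
    v ∈ Submodule.span ℂ {ψ} := by
  rcases eq_or_ne v 0 with rfl | hv0
  · exact Submodule.zero_mem _
  set n := star v ⬝ᵥ v
  have hn : n ≠ 0 := fun h => hv0 (dotProduct_star_self_eq_zero.mp h)
  have hdens : IsDensity d (n⁻¹ • proj d v) :=
    ⟨(posSemidef_vecMulVec_self_star v).smul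
        (inv_nonneg_of_nonneg (dotProduct_star_self_nonneg v)), by
      rw [trace_smul, proj_eq_vecMulVec, trace_vecMulVec, dotProduct_comm, smul_eq_mul,
        inv_mul_cancel₀ hn]⟩
  have hproj : proj d v = n • proj d ψ := by
    rw [← hcollapse _ hdens, map_smul, hv, smul_smul, mul_inv_cancel₀ hn, one_smul]
  have h := congrArg (· *ᵥ v) hproj
  simp only [smul_mulVec, proj_eq_vecMulVec, vecMulVec_star_mulVec] at h
  rw [smul_right_injective _ hn h]
  exact Submodule.smul_mem _ _ (Submodule.mem_span_singleton_self ψ)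

lemma IsNeighborhoodMap.two_mul_finrank_schmidtSpan_le {S : Finset (Fin N)} {E : Sop d}
    (hE : IsNeighborhoodMap d S E) {ψ : Idx d → ℂ} (hψ : star ψ ⬝ᵥ ψ = 1)
    (hfix : E (proj d ψ) = proj d ψ) {ρ : Matrix (Idx d) (Idx d) ℂ} (hρ : IsDensity d ρ)
    (hne : ρ ≠ proj d ψ) (hρψ : E ρ = proj d ψ) :
    2 * Module.finrank ℂ (schmidtSpan d S ψ) ≤ Fintype.card (SIdx d S) := by
  obtain ⟨m, K, hKS, hEK, hK⟩ := hE
  have hKψ := kraus_mulVec_mem_span_of_fixed hψ ((hEK _).symm.trans hfix)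
  obtain ⟨φ, hφ, hψφ, hKφ⟩ := exists_orthogonal_kraus_mulVec_mem_span hψ hρ.1 hρ.2 hne
    ((hEK ρ).symm.trans hρψ) hKψ
  obtain ⟨b, hbψ, hbφ⟩ := exists_kraus_combination_mulVec hK hψ hφ hψφ hKψ hKφ
  obtain ⟨Y, hY⟩ := ActsOn.sum_smul hKS b
  rw [finrank_schmidtSpan]
  refine two_mul_rank_le_card_of_mul_eq_zero (Y := Y) (D := reshape d S φ) ?_ ?_
  · rw [← reshape_mulVec hY, hbψ]
    rfl
  · rw [← reshape_mulVec hY, hbφ]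

end Channels

/-- Theorem 2, small Schmidt span condition: if a unit vector `ψ` in a
multipartite space of dimension at least 2 is finite-time stabilizable with respect to the
neighborhood structure `𝒩`, then (i) `span(ψ) = ⋂ₖ Σ̄_{𝒩ₖ}(ψ)` and (ii) some neighborhood
satisfies `2 dim Σ_{𝒩ₖ}(ψ) ≤ dim H_{𝒩ₖ}`. -/
theorem fts_necessary_small_schmidt_span {N K : ℕ} (d : Fin N → ℕ)
    (𝒩 : Fin K → Finset (Fin N)) (ψ : Idx d → ℂ)
    (hunit : IsUnitVec d ψ) (hdim : 2 ≤ Fintype.card (Idx d))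
    (hFTS : FTS d 𝒩 ψ) :
    (Submodule.span ℂ {ψ} = ⨅ k, extSchmidtSpan d (𝒩 k) ψ) ∧
    (∃ k, 2 * Module.finrank ℂ (schmidtSpan d (𝒩 k) ψ) ≤ Fintype.card (SIdx d (𝒩 k))) := by
  obtain ⟨T, E, hnbhd, hfix, hcollapse⟩ := hFTS
  choose k hk using hnbhd
  have hψ := hunit.star_dotProduct_self
  refine ⟨le_antisymm ?_ fun v hv => ?_, ?_⟩
  · rw [Submodule.span_le, Set.singleton_subset_iff]
    exact Submodule.mem_iInf _ |>.mpr fun j => self_mem_extSchmidtSpan ψ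
  · refine mem_span_of_map_proj_eq_self hcollapse (seqComp_apply_eq_self fun t => ?_)
    exact (hk t).map_proj_of_mem_extSchmidtSpan hψ (hfix t) (Submodule.mem_iInf _ |>.mp hv (k t))
  · obtain ⟨t, ρ, hρ, hne, hρψ⟩ :=
      exists_isDensity_ne_apply_eq_proj hdim (fun t => (hk t).isCPTP) hcollapse
    exact ⟨k t, (hk t).two_mul_finrank_schmidtSpan_le hψ (hfix t) hρ hne hρψ⟩

end QLS
end

section
/- Let V₁ and V₂ be subspaces of a finite-dimensional complex inner product space, let Π₁ and Π₂ be the orthogonal projections onto V₁ and V₂ respectively, and let Π_{1∩2} be the orthogonal projection onto V₁ ∩ V₂. Then Tr(Π₁Π₂) ≥ Tr(Π_{1∩2}) + (1/2)·Tr([Π₁,Π₂]†[Π₁,Π₂]), where [Π₁,Π₂] = Π₁Π₂ − Π₂Π₁. -/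
/-!
With `M = P₁P₂P₁` and `C = [P₁, P₂]`, cyclicity of the trace gives `Tr(M²) = Tr((P₁P₂)²)` and
`Tr(C†C) = 2 Tr(P₁P₂) - 2 Tr((P₁P₂)²)`, so the claim is `Tr(P₁₂) ≤ Tr(M²)`. Since `M` fixes the
range of `P₁₂`, `Tr(M²) - Tr(P₁₂) = Tr((M - P₁₂)†(M - P₁₂)) ≥ 0`.
-/

open LinearMap RCLike

section Idempotent

variable {R M : Type*} [CommRing R] [AddCommGroup M] [Module R M]

theorem IsIdempotentElem.trace_mul_mul_self {p : Module.End R M} (hp : IsIdempotentElem p)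
    (a : Module.End R M) : trace R M (p * a * p) = trace R M (p * a) := by
  rw [trace_mul_cycle, hp.eq]

theorem IsIdempotentElem.trace_commutator_sq {p q : Module.End R M} (hp : IsIdempotentElem p)
    (hq : IsIdempotentElem q) :
    trace R M ((p * q - q * p) ^ 2) = 2 * trace R M ((p * q) ^ 2) - 2 * trace R M (p * q) := by
  have hqpq : trace R M (q * p * q) = trace R M (p * q) := by
    rw [hq.trace_mul_mul_self, trace_mul_comm]
  have hqpqp : trace R M (q * p * q * p) = trace R M (p * q * p * q) := by
    rw [trace_mul_comm, ← mul_assoc, ← mul_assoc]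
  have hexpand : (p * q - q * p) ^ 2 =
      p * q * p * q - p * q * q * p - q * p * p * q + q * p * q * p := by
    noncomm_ring
  rw [hexpand, mul_assoc p q q, hq.eq, mul_assoc q p p, hp.eq, sq, ← mul_assoc]
  simp only [map_add, map_sub, hp.trace_mul_mul_self, hqpq, hqpqp]
  ring

end Idempotent

section InnerProduct

variable {𝕜 E : Type*} [RCLike 𝕜] [NormedAddCommGroup E] [InnerProductSpace 𝕜 E]
  [FiniteDimensional 𝕜 E]

theorem re_trace_le_re_trace_sq_of_mul_eq {m r : E →ₗ[𝕜] E} (hm : IsSelfAdjoint m)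
    (hr : IsStarProjection r) (hmr : m * r = r) :
    re (trace 𝕜 E r) ≤ re (trace 𝕜 E (m ^ 2)) := by
  have hrm : trace 𝕜 E (r * m) = trace 𝕜 E r := by rw [trace_mul_comm, hmr]
  have hgram : trace 𝕜 E (star (m - r) * (m - r)) = trace 𝕜 E (m ^ 2) - trace 𝕜 E r := by
    rw [star_sub, hm.star_eq, hr.isSelfAdjoint.star_eq, sub_mul, mul_sub, mul_sub, hmr,
      hr.isIdempotentElem.eq, sq]
    simp only [map_sub, hrm]
    ring
  have hnonneg : 0 ≤ re (trace 𝕜 E (star (m - r) * (m - r))) :=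
    (nonneg_iff.mp (isPositive_adjoint_comp_self (m - r)).trace_nonneg).1
  rw [hgram, map_sub] at hnonneg
  linarith

theorem IsStarProjection.re_trace_le_re_trace_mul_sq {p q r : E →ₗ[𝕜] E}
    (hp : IsStarProjection p) (hq : IsStarProjection q) (hr : IsStarProjection r)
    (hrange : range r ≤ range p ⊓ range q) :
    re (trace 𝕜 E r) ≤ re (trace 𝕜 E ((p * q) ^ 2)) := by
  have hpr : p * r = r := (hp.isIdempotentElem.comp_eq_right_iff r).mpr (le_inf_iff.mp hrange).1
  have hqr : q * r = r := (hq.isIdempotentElem.comp_eq_right_iff r).mpr (le_inf_iff.mp hrange).2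
  have hsq : (p * q * p) ^ 2 = p * (q * p * q) * p := by
    simp only [sq, ← mul_assoc]
    rw [mul_assoc (p * q) p p, hp.isIdempotentElem.eq]
  have htrace : trace 𝕜 E ((p * q * p) ^ 2) = trace 𝕜 E ((p * q) ^ 2) := by
    rw [hsq, hp.isIdempotentElem.trace_mul_mul_self, sq]
    simp only [mul_assoc]
  rw [← htrace]
  exact re_trace_le_re_trace_sq_of_mul_eq (hq.isSelfAdjoint.conjugate_self hp.isSelfAdjoint) hr
    (by rw [mul_assoc, mul_assoc, hpr, hqr, hpr])

end InnerProduct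

/-- Lemma 3, trace inequality for projections: for orthogonal
projections `P₁`, `P₂`, `P₁₂` onto subspaces `V₁`, `V₂`, `V₁ ⊓ V₂` of a finite-dimensional
complex inner product space,
`Tr(P₁P₂) ≥ Tr(P₁₂) + (1/2)·Tr([P₁,P₂]†[P₁,P₂])`. -/
theorem trace_projection_commutator_inequality
    {E : Type*} [NormedAddCommGroup E] [InnerProductSpace ℂ E] [FiniteDimensional ℂ E]
    (V₁ V₂ : Submodule ℂ E) (P₁ P₂ P₁₂ : E →ₗ[ℂ] E)
    (hP₁ : LinearMap.adjoint P₁ = P₁ ∧ P₁ ∘ₗ P₁ = P₁ ∧ LinearMap.range P₁ = V₁)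
    (hP₂ : LinearMap.adjoint P₂ = P₂ ∧ P₂ ∘ₗ P₂ = P₂ ∧ LinearMap.range P₂ = V₂)
    (hP₁₂ : LinearMap.adjoint P₁₂ = P₁₂ ∧ P₁₂ ∘ₗ P₁₂ = P₁₂ ∧
      LinearMap.range P₁₂ = V₁ ⊓ V₂) :
    (LinearMap.trace ℂ E (P₁ ∘ₗ P₂)).re ≥
      (LinearMap.trace ℂ E P₁₂).re +
      (1 / 2 : ℝ) * (LinearMap.trace ℂ E
        ((LinearMap.adjoint (P₁ ∘ₗ P₂ - P₂ ∘ₗ P₁)) ∘ₗ (P₁ ∘ₗ P₂ - P₂ ∘ₗ P₁))).re := by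
  obtain ⟨h₁adj, h₁idem, rfl⟩ := hP₁
  obtain ⟨h₂adj, h₂idem, rfl⟩ := hP₂
  obtain ⟨h₁₂adj, h₁₂idem, h₁₂range⟩ := hP₁₂
  have hp : IsStarProjection P₁ := ⟨h₁idem, h₁adj⟩
  have hq : IsStarProjection P₂ := ⟨h₂idem, h₂adj⟩
  have hstar : star (P₁ * P₂ - P₂ * P₁) * (P₁ * P₂ - P₂ * P₁) = -(P₁ * P₂ - P₂ * P₁) ^ 2 := by
    rw [star_sub, star_mul, star_mul, hp.isSelfAdjoint.star_eq, hq.isSelfAdjoint.star_eq, sq,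
      ← neg_sub, neg_mul]
  have hcomm := hp.isIdempotentElem.trace_commutator_sq hq.isIdempotentElem
  have hle := hp.re_trace_le_re_trace_mul_sq hq ⟨h₁₂idem, h₁₂adj⟩ h₁₂range.le
  change re (trace ℂ E (P₁ * P₂)) ≥ re (trace ℂ E P₁₂) +
    (1 / 2 : ℝ) * re (trace ℂ E (star (P₁ * P₂ - P₂ * P₁) * (P₁ * P₂ - P₂ * P₁)))
  rw [hstar, map_neg, hcomm, map_neg, map_sub, ofNat_mul_re, ofNat_mul_re]
  linarith
end
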